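/- arXiv:2202.05202 — 3 statements merged into one kernel-verified Lean document; each statement's English description precedes it below -/
import Mathlib

section
/- Let V ⊂ ℝ² be an open bounded convex body with smooth boundary, and let x₁, x₂, … be a (possibly infinite) collection of points of ℝ² not in V. Let W be the set of points x ∈ ∂V that cannot be seen from any xᵢ, i.e. such that every segment x xᵢ meets V. Then V is contained in the closed convex hull of W ∪ {x₁, x₂, …}. -/
/-- Lemma 1.3: Let `V ⊂ ℝ²` be an open bounded convex body with smooth boundary
(at each boundary point there is a unique unit supporting functional), and
`x₁, x₂, …` points not in `V`.  If `W` is the set of boundary points of `V` that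
cannot be seen from any `xᵢ` (every segment from them to an `xᵢ` meets `V`), then
`V` is contained in the closed convex hull of `W` together with the `xᵢ`. -/
theorem stmt_8 {ι : Type*} (V : Set (EuclideanSpace ℝ (Fin 2)))
    (hVconv : Convex ℝ V) (hVopen : IsOpen V) (hVbdd : Bornology.IsBounded V)
    (hVne : V.Nonempty)
    (hsmooth : ∀ x ∈ frontier V,
      ∃! f : EuclideanSpace ℝ (Fin 2) →L[ℝ] ℝ, ‖f‖ = 1 ∧ ∀ v ∈ V, f v ≤ f x)
    (p : ι → EuclideanSpace ℝ (Fin 2)) (hp : ∀ i, p i ∉ V) :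
    V ⊆ closure (convexHull ℝ
      ({x ∈ frontier V | ∀ i, (segment ℝ x (p i) ∩ V).Nonempty} ∪ Set.range p)) := by
  set W : Set (EuclideanSpace ℝ (Fin 2)) :=
    {x ∈ frontier V | ∀ i, (segment ℝ x (p i) ∩ V).Nonempty} with hWdef
  set C : Set (EuclideanSpace ℝ (Fin 2)) :=
    closure (convexHull ℝ (W ∪ Set.range p)) with hCdef
  have hsubC : W ∪ Set.range p ⊆ C :=
    (subset_convexHull ℝ _).trans subset_closure
  intro v hv
  by_contra hvC
  -- The base set is nonempty
  have hVnu : V ≠ Set.univ := by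
    intro h
    obtain ⟨R, hR⟩ := hVbdd.subset_ball 0
    have := hR (by rw [h]; trivial :
      (EuclideanSpace.single (0 : Fin 2) (|R| + 1) : EuclideanSpace ℝ (Fin 2)) ∈ V)
    rw [Metric.mem_ball, dist_zero_right, EuclideanSpace.norm_single,
      Real.norm_eq_abs, abs_of_pos (by positivity)] at this
    linarith [le_abs_self R]
  have hbase : (W ∪ Set.range p).Nonempty := by
    rcases isEmpty_or_nonempty ι with hι | hι
    · obtain ⟨x, hx⟩ := nonempty_frontier_iff.2 ⟨hVne, hVnu⟩
      exact ⟨x, Or.inl ⟨hx, fun i => (IsEmpty.false i).elim⟩⟩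
    · obtain ⟨i⟩ := hι
      exact ⟨p i, Or.inr ⟨i, rfl⟩⟩
  -- Separate v from C
  obtain ⟨f, u, hfu, hvu⟩ := geometric_hahn_banach_closed_point
    (convex_convexHull ℝ _).closure isClosed_closure hvC
  have hfne : f ≠ 0 := by
    intro h
    obtain ⟨a, ha⟩ := hbase
    have h1 := hfu a (hsubC ha)
    rw [h] at h1 hvu
    simp at h1 hvu
    linarith
  -- Maximize f over closure V
  obtain ⟨x, hxcl, hmax⟩ := hVbdd.isCompact_closure.exists_isMaxOn
    hVne.closure f.continuous.continuousOn
  have hvx : f v ≤ f x := hmax (subset_closure hv)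
  -- x is a frontier point
  have hxfr : x ∈ frontier V := by
    rw [frontier, hVopen.interior_eq]
    refine ⟨hxcl, fun hxV => ?_⟩
    obtain ⟨w, hw⟩ : ∃ w, f w ≠ 0 := by
      by_contra h
      push_neg at h
      exact hfne (ContinuousLinearMap.ext fun y => by simp [h y])
    obtain ⟨w, hw⟩ : ∃ w : EuclideanSpace ℝ (Fin 2), 0 < f w := by
      rcases lt_or_gt_of_ne hw with h | h
      · exact ⟨-w, by simpa using h⟩
      · exact ⟨w, h⟩
    obtain ⟨ε, hε, hball⟩ := Metric.isOpen_iff.1 hVopen x hxV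
    have hwne : w ≠ 0 := by rintro rfl; simp at hw
    have hwpos : 0 < ‖w‖ := norm_pos_iff.2 hwne
    set t : ℝ := ε / (2 * ‖w‖) with ht
    have htpos : 0 < t := div_pos hε (by linarith)
    have hmem : x + t • w ∈ V := by
      apply hball
      rw [Metric.mem_ball, dist_eq_norm]
      have h2 : x + t • w - x = t • w := by abel
      rw [h2, norm_smul, Real.norm_eq_abs, abs_of_pos htpos]
      have h3 : t * ‖w‖ = ε / 2 := by
        rw [ht]; field_simp
      rw [h3]; linarith
    have := hmax (subset_closure hmem)
    simp only [Set.mem_setOf_eq, map_add, map_smul, smul_eq_mul] at this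
    nlinarith
  -- x is invisible from every p i
  have hxW : x ∈ W := by
    refine ⟨hxfr, fun i => ?_⟩
    by_contra hseg
    rw [Set.not_nonempty_iff_eq_empty] at hseg
    have hdisj : Disjoint V (segment ℝ x (p i)) := by
      rw [Set.disjoint_iff_inter_eq_empty, Set.inter_comm]
      exact hseg
    obtain ⟨g, u', hgu, hgs⟩ :=
      geometric_hahn_banach_open hVconv hVopen (convex_segment _ _) hdisj
    have hgx : u' ≤ g x := hgs x (left_mem_segment ℝ x (p i))
    have hgne : g ≠ 0 := by
      intro h
      obtain ⟨a, ha⟩ := hVne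
      have h1 := hgu a ha
      rw [h] at h1 hgx
      simp at h1 hgx
      linarith
    -- g x = u' : x in closure V so g x ≤ u'
    have hgxle : g x ≤ u' := by
      have : closure V ⊆ {y | g y ≤ u'} :=
        closure_minimal (fun a ha => (hgu a ha).le)
          (isClosed_le g.continuous continuous_const)
      exact this hxcl
    have hgxeq : g x = u' := le_antisymm hgxle hgx
    -- uniqueness of the supporting functional
    obtain ⟨h, _, huniq⟩ := hsmooth x hxfr
    have hfn : (0:ℝ) < ‖f‖ := norm_pos_iff.2 hfne
    have hgn : (0:ℝ) < ‖g‖ := norm_pos_iff.2 hgne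
    have hf1 : (‖f‖⁻¹ • f : EuclideanSpace ℝ (Fin 2) →L[ℝ] ℝ) = h := by
      apply huniq
      constructor
      · rw [norm_smul ‖f‖⁻¹ f, Real.norm_eq_abs, abs_of_pos (by positivity),
          inv_mul_cancel₀ hfn.ne']
      · intro y hy
        simp only [ContinuousLinearMap.smul_apply, smul_eq_mul]
        exact mul_le_mul_of_nonneg_left (hmax (subset_closure hy)) (by positivity)
    have hg1 : (‖g‖⁻¹ • g : EuclideanSpace ℝ (Fin 2) →L[ℝ] ℝ) = h := by
      apply huniq
      constructor
      · rw [norm_smul ‖g‖⁻¹ g, Real.norm_eq_abs, abs_of_pos (by positivity),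
          inv_mul_cancel₀ hgn.ne']
      · intro y hy
        simp only [ContinuousLinearMap.smul_apply, smul_eq_mul]
        have : g y ≤ g x := by rw [hgxeq]; exact (hgu y hy).le
        exact mul_le_mul_of_nonneg_left this (by positivity)
    have heq : (‖f‖⁻¹ • f : EuclideanSpace ℝ (Fin 2) →L[ℝ] ℝ) = ‖g‖⁻¹ • g := by
      rw [hf1, hg1]
    -- g (p i) ≥ g x, transfer to f
    have hgpi : g x ≤ g (p i) := by
      rw [hgxeq]; exact hgs (p i) (right_mem_segment ℝ x (p i))
    have hfpi : f x ≤ f (p i) := by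
      have h1 : ‖f‖⁻¹ * f x ≤ ‖f‖⁻¹ * f (p i) := by
        have e1 := congrFun (congrArg DFunLike.coe heq) x
        have e2 := congrFun (congrArg DFunLike.coe heq) (p i)
        simp only [ContinuousLinearMap.smul_apply, smul_eq_mul] at e1 e2
        rw [e1, e2]
        exact mul_le_mul_of_nonneg_left hgpi (by positivity)
      exact le_of_mul_le_mul_left h1 (by positivity)
    -- but f (p i) < u < f v ≤ f x
    have : f (p i) < u := hfu (p i) (hsubC (Or.inr ⟨i, rfl⟩))
    linarith
  -- contradiction: x ∈ W ⊆ C, so f x < u < f v ≤ f x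
  have : f x < u := hfu x (hsubC (Or.inl hxW))
  linarith
end

section
/- For k < 1, let F_k(x,y,z) = -x³ - y³ - (z-x-y)³ + 3kxy(z-x-y). Then every affine point (x,y) with F_k(x,y,1) = 0 lies in one of the three regions {x>0, y>0, x+y>1}, {x>0, y<0, x+y<1}, {x<0, y>0, x+y<1}. -/
/-- The translated Hesse cubic `F_k(x,y,z) = -x³ - y³ - (z-x-y)³ + 3kxy(z-x-y)`. -/
def hesseF (k x y z : ℝ) : ℝ :=
  -x ^ 3 - y ^ 3 - (z - x - y) ^ 3 + 3 * k * x * y * (z - x - y)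

/-- For `k < 1`, every affine point `(x,y)` with `F_k(x,y,1) = 0` lies in one of
the three regions `{x>0, y>0, x+y>1}`, `{x>0, y<0, x+y<1}`, `{x<0, y>0, x+y<1}`. -/
theorem stmt_13 (k x y : ℝ) (hk : k < 1) (h : hesseF k x y 1 = 0) :
    (0 < x ∧ 0 < y ∧ 1 < x + y) ∨
    (0 < x ∧ y < 0 ∧ x + y < 1) ∨
    (x < 0 ∧ 0 < y ∧ x + y < 1) := by
  unfold hesseF at h
  have hS : (x - y) ^ 2 + (x - (1 - x - y)) ^ 2 + (y - (1 - x - y)) ^ 2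
      = 6 * (k - 1) * (x * y * (1 - x - y)) := by linear_combination (-2 : ℝ) * h
  have key : x * y * (1 - x - y) < 0 := by
    by_contra hc
    push_neg at hc
    have h1 : (1 - k) * (x * y * (1 - x - y)) ≥ 0 := mul_nonneg (by linarith) hc
    have hS0 : (x - y) ^ 2 + (x - (1 - x - y)) ^ 2 + (y - (1 - x - y)) ^ 2 ≤ 0 := by
      nlinarith
    have q1 : (x - y) ^ 2 = 0 := le_antisymm
      (by nlinarith [sq_nonneg (x - (1 - x - y)), sq_nonneg (y - (1 - x - y))]) (sq_nonneg _)
    have q2 : (x - (1 - x - y)) ^ 2 = 0 := le_antisymm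
      (by nlinarith [sq_nonneg (x - y), sq_nonneg (y - (1 - x - y))]) (sq_nonneg _)
    have e1 : x = y := sub_eq_zero.mp (pow_eq_zero_iff two_ne_zero |>.mp q1)
    have e2 : x = 1 - x - y := sub_eq_zero.mp (pow_eq_zero_iff two_ne_zero |>.mp q2)
    have hx3 : x = 1 / 3 := by linarith
    rw [hx3, ← e1, hx3] at hS
    nlinarith
  rcases lt_trichotomy x 0 with hx | hx | hx
  · rcases lt_trichotomy y 0 with hy | hy | hy
    · exfalso
      nlinarith [mul_pos_of_neg_of_neg hx hy]
    · exfalso; simp [hy] at key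
    · right; right
      refine ⟨hx, hy, ?_⟩
      nlinarith [mul_neg_of_neg_of_pos hx hy]
  · exfalso; simp [hx] at key
  · rcases lt_trichotomy y 0 with hy | hy | hy
    · right; left
      refine ⟨hx, hy, ?_⟩
      nlinarith [mul_neg_of_pos_of_neg hx hy]
    · exfalso; simp [hy] at key
    · left
      refine ⟨hx, hy, ?_⟩
      nlinarith [mul_pos hx hy]
end

section
/- For k > 1, every affine real point (x,y) of the curve F_k(x,y,1) = 0 outside the closed triangle with vertices (0,0), (1,0), (0,1) lies in one of the three regions {x<0, y<0}, {y<0, x+y>1}, {x<0, x+y>1}. Moreover the bounded component of the curve lies inside the triangle {x>0, y>0, x+y<1}. -/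
lemma hesse_key (k x y : ℝ) (h : hesseF k x y 1 = 0) :
    3 * (k - 1) * (x * y * (1 - x - y)) =
      ((x - y) ^ 2 + (y - (1 - x - y)) ^ 2 + ((1 - x - y) - x) ^ 2) / 2 := by
  unfold hesseF at h
  nlinarith [h]

lemma hesse_nonneg (k x y : ℝ) (hk : 1 < k) (h : hesseF k x y 1 = 0) :
    0 ≤ x * y * (1 - x - y) := by
  have key := hesse_key k x y h
  nlinarith [sq_nonneg (x - y), sq_nonneg (y - (1 - x - y)), sq_nonneg ((1 - x - y) - x)]

lemma hesse_eq_zero (k x y : ℝ) (hk : 1 < k) (h : hesseF k x y 1 = 0)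
    (h0 : x * y * (1 - x - y) = 0) : x = 1/3 ∧ y = 1/3 := by
  have key := hesse_key k x y h
  rw [h0] at key
  constructor <;>
    nlinarith [sq_nonneg (x - y), sq_nonneg (y - (1 - x - y)), sq_nonneg ((1 - x - y) - x)]

/-- For `k > 1`, every affine point of `F_k = 0` outside the closed triangle of
reference lies in one of the regions `{x<0, y<0}`, `{y<0, x+y>1}`, `{x<0, x+y>1}`;
moreover any point of the curve in the closed triangle lies strictly inside it
(so the bounded component lies inside the open triangle). -/
theorem stmt_14 (k : ℝ) (hk : 1 < k) :
    (∀ x y : ℝ, hesseF k x y 1 = 0 → ¬(0 ≤ x ∧ 0 ≤ y ∧ x + y ≤ 1) →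
      (x < 0 ∧ y < 0) ∨ (y < 0 ∧ 1 < x + y) ∨ (x < 0 ∧ 1 < x + y)) ∧
    (∀ x y : ℝ, hesseF k x y 1 = 0 → (0 ≤ x ∧ 0 ≤ y ∧ x + y ≤ 1) →
      0 < x ∧ 0 < y ∧ x + y < 1) := by
  constructor
  · intro x y h hntri
    push_neg at hntri
    have hp : 0 < x * y * (1 - x - y) := by
      rcases lt_or_eq_of_le (hesse_nonneg k x y hk h) with hp | hp
      · exact hp
      · obtain ⟨hx, hy⟩ := hesse_eq_zero k x y hk h hp.symm
        exfalso
        have := hntri (by norm_num [hx]) (by norm_num [hy])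
        rw [hx, hy] at this; norm_num at this
    rcases lt_trichotomy x 0 with hx | hx | hx
    · rcases lt_trichotomy y 0 with hy | hy | hy
      · exact Or.inl ⟨hx, hy⟩
      · rw [hy] at hp; simp at hp
      · right; right
        refine ⟨hx, ?_⟩
        by_contra hu
        push_neg at hu
        nlinarith [mul_nonneg (by nlinarith : (0:ℝ) ≤ -(x*y)) (by linarith : (0:ℝ) ≤ 1 - x - y)]
    · rw [hx] at hp; simp at hp
    · rcases lt_trichotomy y 0 with hy | hy | hy
      · right; left
        refine ⟨hy, ?_⟩
        by_contra hu
        push_neg at hu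
        nlinarith [mul_nonneg (by nlinarith : (0:ℝ) ≤ -(x*y)) (by linarith : (0:ℝ) ≤ 1 - x - y)]
      · rw [hy] at hp; simp at hp
      · exfalso
        have hu : 0 < 1 - x - y := by
          by_contra hu
          push_neg at hu
          nlinarith [mul_pos hx hy]
        have := hntri hx.le hy.le
        linarith
  · intro x y h ⟨hx, hy, hxy⟩
    have hnz : x * y * (1 - x - y) ≠ 0 := by
      intro h0
      obtain ⟨h1, h2⟩ := hesse_eq_zero k x y hk h h0
      rw [h1, h2] at h0; norm_num at h0
    refine ⟨?_, ?_, ?_⟩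
    · rcases lt_or_eq_of_le hx with h' | h'
      · exact h'
      · exact absurd (by rw [← h']; ring) hnz
    · rcases lt_or_eq_of_le hy with h' | h'
      · exact h'
      · exact absurd (by rw [← h']; ring) hnz
    · rcases lt_or_eq_of_le hxy with h' | h'
      · exact h'
      · exact absurd (by rw [show (1:ℝ) - x - y = 0 by linarith]; ring) hnz
end
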